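/- arXiv:0812.4322 — 4 statements merged into one kernel-verified Lean document; each statement's English description precedes it below -/
import Mathlib

section
/- If a pizza is cut into an even number n of slices arranged in a circle, then Alice has a strategy (in the alternating-turn game under the Polite Pizza Protocol, with Alice moving first) guaranteeing her slices of total size at least half of the pizza. Specifically, partitioning the slices into two classes by parity of position, Alice takes a slice from the larger class and thereafter always makes shifts, forcing Bob to take only slices of the other class. -/
/-- Adjacency of slices on the circular pizza with `n` slices. -/
def adj (n : ℕ) (i j : Fin n) : Prop :=
  (i.1 + 1) % n = j.1 ∨ (j.1 + 1) % n = i.1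

instance (n : ℕ) (i j : Fin n) : Decidable (adj n i j) := by
  unfold adj; infer_instance

/-- `h` lists the slices taken so far, in the order they were taken.
It is a valid (partial) play of the Polite Pizza Protocol if no slice is taken
twice and every slice except the first is adjacent to a previously taken one. -/
def ValidHist (n : ℕ) (h : List (Fin n)) : Prop :=
  h.Nodup ∧ ∀ (k : ℕ) (hk : k < h.length), 0 < k →
    ∃ (j : ℕ) (hj : j < k), adj n (h.get ⟨k, hk⟩) (h.get ⟨j, hj.trans hk⟩)

/-- `m` is a legal next slice after history `h`. -/
def ValidMove (n : ℕ) (h : List (Fin n)) (m : Fin n) : Prop :=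
  m ∉ h ∧ (h = [] ∨ ∃ x ∈ h, adj n m x)

/-- Total size of the slices taken at (0-based) turns satisfying `f`. -/
def gainOn (n : ℕ) (P : Fin n → ℝ) (f : ℕ → Bool) (l : List (Fin n)) : ℝ :=
  ((((List.range l.length).zip l).filter (fun p => f p.1)).map (fun p => P p.2)).sum

/-- Alice moves at even turns (0-based), Bob at odd turns. -/
def isAlice (k : ℕ) : Bool := k % 2 == 0
def isBob (k : ℕ) : Bool := k % 2 == 1

def aliceGain (n : ℕ) (P : Fin n → ℝ) (l : List (Fin n)) : ℝ := gainOn n P isAlice l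
def bobGain (n : ℕ) (P : Fin n → ℝ) (l : List (Fin n)) : ℝ := gainOn n P isBob l

/-- The play `l` is consistent with the strategy `s` used at the turns satisfying `f`. -/
def Consistent (n : ℕ) (f : ℕ → Bool) (s : List (Fin n) → Fin n) (l : List (Fin n)) : Prop :=
  ∀ (k : ℕ) (hk : k < l.length), f k → l.get ⟨k, hk⟩ = s (l.take k)

/-- The strategy `s`, used at turns satisfying `f`, always produces legal moves. -/
def Legal (n : ℕ) (f : ℕ → Bool) (s : List (Fin n) → Fin n) : Prop :=
  ∀ h, ValidHist n h → h.length < n → f h.length → ValidMove n h (s h)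

/-- Number of jumps made at turns satisfying `f` during the play `l`:
turn `k ≥ 1` is a jump if the slice taken is not adjacent to the one taken at turn `k-1`. -/
def jumpCount (n : ℕ) (f : ℕ → Bool) (l : List (Fin n)) : ℕ :=
  (((List.range (l.zip l.tail).length).zip (l.zip l.tail)).filter
    (fun p => f (p.1 + 1) && !(decide (adj n p.2.2 p.2.1)))).length

/-- Alice has a strategy making at most `j` jumps and guaranteeing her
slices of total size at least `g`. -/
def AliceJGain (n : ℕ) (P : Fin n → ℝ) (j : ℕ) (g : ℝ) : Prop :=
  ∃ s : List (Fin n) → Fin n, Legal n isAlice s ∧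
    ∀ l : List (Fin n), ValidHist n l → l.length = n → Consistent n isAlice s l →
      g ≤ aliceGain n P l ∧ jumpCount n isAlice l ≤ j

/-- Alice has a strategy guaranteeing her slices of total size at least `g`. -/
def AliceGain' (n : ℕ) (P : Fin n → ℝ) (g : ℝ) : Prop :=
  ∃ s : List (Fin n) → Fin n, Legal n isAlice s ∧
    ∀ l : List (Fin n), ValidHist n l → l.length = n → Consistent n isAlice s l →
      g ≤ aliceGain n P l

/-- Bob (moving second) has a strategy guaranteeing him slices of total size at least `g`. -/
def BobGain' (n : ℕ) (P : Fin n → ℝ) (g : ℝ) : Prop :=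
  ∃ s : List (Fin n) → Fin n, Legal n isBob s ∧
    ∀ l : List (Fin n), ValidHist n l → l.length = n → Consistent n isBob s l →
      g ≤ bobGain n P l

/-!
Colour slice `i` by the parity of `i`; as `n` is even, neighbouring slices have different colours.
Alice first takes a slice of the heavier colour class and afterwards always takes a free neighbour
of the slice taken just before. The slices taken so far always form an arc, and the slice taken
last is one of its ends. When Bob moves the arc has odd length, so both of its ends have the colour
of Alice's last slice and both free slices next to the arc have the other colour; when Alice moves,
she takes a neighbour of Bob's last slice. So the colours alternate along the play, and Bob only
gets slices of the lighter class.
-/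

section

open scoped Fin.NatCast Fin.CommRing

variable {n : ℕ}

lemma exists_getElem_eq_of_mem_range_zip {α : Type*} {l : List α} {p : ℕ × α}
    (hp : p ∈ (List.range l.length).zip l) : ∃ hlt : p.1 < l.length, l[p.1] = p.2 := by
  obtain ⟨i, hi, rfl⟩ := List.mem_iff_getElem.1 hp
  simp only [List.length_zip, List.length_range, Nat.min_self] at hi
  simp [hi]

lemma gainOn_add_gainOn_not (P : Fin n → ℝ) (f : ℕ → Bool) (l : List (Fin n)) :
    gainOn n P f l + gainOn n P (fun k => !f k) l = (l.map P).sum := by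
  have hsplit := ((List.filter_append_perm (fun p : ℕ × Fin n => f p.1)
    ((List.range l.length).zip l)).map (fun p => P p.2)).sum_eq
  rw [List.map_append, List.sum_append] at hsplit
  rw [gainOn, gainOn, hsplit]
  exact congrArg List.sum ((List.map_map (f := Prod.snd) (g := P)).symm.trans
    (congrArg _ (List.map_snd_zip (by simp))))

lemma gainOn_le_sum_of_getElem_mem {P : Fin n → ℝ} {f : ℕ → Bool}
    {l : List (Fin n)} {s : Finset (Fin n)} (hP : ∀ i, 0 ≤ P i) (hl : l.Nodup)
    (hs : ∀ k (hk : k < l.length), f k → l[k] ∈ s) :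
    gainOn n P f l ≤ ∑ i ∈ s, P i := by
  set L := (((List.range l.length).zip l).filter (fun p => f p.1)).map Prod.snd
  have hsub : L.Sublist l := by
    simpa [List.map_snd_zip] using
      (List.filter_sublist (l := (List.range l.length).zip l)).map Prod.snd
  have hLs : L.toFinset ⊆ s := by
    intro x hx
    obtain ⟨p, hp, rfl⟩ := List.mem_map.1 (List.mem_toFinset.1 hx)
    obtain ⟨hpl, hfp⟩ := List.mem_filter.1 hp
    obtain ⟨hk, hget⟩ := exists_getElem_eq_of_mem_range_zip hpl
    exact hget ▸ hs p.1 hk hfp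
  calc gainOn n P f l = (L.map P).sum := by rw [gainOn, List.map_map]; rfl
    _ = ∑ i ∈ L.toFinset, P i := (List.sum_toFinset P (hl.sublist hsub)).symm
    _ ≤ ∑ i ∈ s, P i := Finset.sum_le_sum_of_subset_of_nonneg hLs fun i _ _ => hP i

lemma jumpCount_eq_zero {f : ℕ → Bool} {l : List (Fin n)}
    (hl : ∀ k (hk : k + 1 < l.length), f (k + 1) → adj n l[k + 1] l[k]) :
    jumpCount n f l = 0 := by
  rw [jumpCount, List.length_eq_zero_iff, List.filter_eq_nil_iff]
  rintro ⟨k, u, v⟩ hp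
  obtain ⟨hk, hget⟩ := exists_getElem_eq_of_mem_range_zip hp
  simp only [List.length_zip, List.length_tail] at hk
  simp only [List.getElem_zip, List.getElem_tail, Prod.mk.injEq] at hget
  rw [← hget.1, ← hget.2]
  cases hf : f (k + 1)
  · simp
  · simp [hl k (by omega) hf]

lemma isBob_eq_not_isAlice : isBob = fun k => !isAlice k := by
  funext k
  rcases Nat.mod_two_eq_zero_or_one k with hk | hk <;> simp [isAlice, isBob, hk]

lemma aliceGain_add_bobGain (P : Fin n → ℝ) (l : List (Fin n)) :
    aliceGain n P l + bobGain n P l = (l.map P).sum := by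
  rw [aliceGain, bobGain, isBob_eq_not_isAlice, gainOn_add_gainOn_not]

lemma List.Nodup.sum_map_eq_sum_univ {α M : Type*} [Fintype α] [DecidableEq α]
    [AddCommMonoid M] {l : List α} (hl : l.Nodup) (hlen : l.length = Fintype.card α)
    (f : α → M) : (l.map f).sum = ∑ i, f i := by
  rw [← List.sum_toFinset f hl,
    Finset.eq_univ_of_card l.toFinset (by rw [List.toFinset_card_of_nodup hl, hlen])]

lemma ValidHist.of_append_singleton {h : List (Fin n)} {w : Fin n}
    (hv : ValidHist n (h ++ [w])) : ValidHist n h ∧ ValidMove n h w := by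
  obtain ⟨hnd, hadj⟩ := hv
  rw [List.nodup_append] at hnd
  refine ⟨⟨hnd.1, fun k hk hk0 => ?_⟩, fun hw => hnd.2.2 w hw w (by simp) rfl, ?_⟩
  · obtain ⟨j, hj, hja⟩ := hadj k (by simp; omega) hk0
    refine ⟨j, hj, ?_⟩
    simpa [List.getElem_append_left hk, List.getElem_append_left (hj.trans hk)] using hja
  · rcases List.eq_nil_or_concat' h with rfl | ⟨h', w', rfl⟩
    · exact Or.inl rfl
    · obtain ⟨j, hj, hja⟩ := hadj (h' ++ [w']).length (by simp) (by simp)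
      refine Or.inr ⟨_, List.getElem_mem hj, ?_⟩
      simpa [← List.append_assoc, List.getElem_append_left hj] using hja

lemma Consistent.of_append_singleton {f : ℕ → Bool} {s : List (Fin n) → Fin n}
    {h : List (Fin n)} {w : Fin n} (hc : Consistent n f s (h ++ [w])) :
    Consistent n f s h ∧ (f h.length → w = s h) := by
  refine ⟨fun k hk hf => ?_, fun hf => ?_⟩
  · simpa [List.getElem_append_left hk, List.take_append, Nat.sub_eq_zero_of_le hk.le]
      using hc k (by simp; omega) hf
  · simpa using hc h.length (by simp) hf

def parity (x : Fin n) : ZMod 2 := x.val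

lemma parity_add (he : Even n) (x y : Fin n) : parity (x + y) = parity x + parity y := by
  have hmod : ((x.val + y.val) % n : ℕ) = ((x.val + y.val : ℕ) : ZMod 2) :=
    (ZMod.natCast_eq_natCast_iff' _ _ 2).2 (Nat.mod_mod_of_dvd _ (even_iff_two_dvd.1 he))
  simp [parity, Fin.val_add, hmod]

variable [NeZero n]

lemma adj_iff (i j : Fin n) : adj n i j ↔ j = i + 1 ∨ i = j + 1 := by
  simp only [adj, Fin.ext_iff, Fin.val_add, Fin.val_one', Nat.add_mod_mod]
  tauto

lemma adj_add_one (x : Fin n) : adj n (x + 1) x := (adj_iff _ _).2 (Or.inr rfl)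

lemma adj_sub_one (x : Fin n) : adj n (x - 1) x :=
  (adj_iff _ _).2 (Or.inl (sub_add_cancel x 1).symm)

def arc (a : Fin n) (m : ℕ) : Set (Fin n) := {x | ∃ t < m, a + t = x}

lemma mem_arc_succ {a x : Fin n} {m : ℕ} :
    x ∈ arc a (m + 1) ↔ x ∈ arc a m ∨ x = a + m := by
  constructor
  · rintro ⟨t, ht, rfl⟩
    rcases Nat.lt_succ_iff_lt_or_eq.1 ht with ht | rfl
    exacts [Or.inl ⟨t, ht, rfl⟩, Or.inr rfl]
  · rintro (⟨t, ht, rfl⟩ | rfl)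
    exacts [⟨t, by omega, rfl⟩, ⟨m, by omega, rfl⟩]

lemma mem_arc_sub_one_succ {a x : Fin n} {m : ℕ} :
    x ∈ arc (a - 1) (m + 1) ↔ x = a - 1 ∨ x ∈ arc a m := by
  constructor
  · rintro ⟨_ | t, ht, rfl⟩
    · simp
    · exact Or.inr ⟨t, by omega, by push_cast; ring⟩
  · rintro (rfl | ⟨t, ht, rfl⟩)
    exacts [⟨0, by omega, by simp⟩, ⟨t + 1, by omega, by push_cast; ring⟩]

lemma add_natCast_notMem_arc {a : Fin n} {m : ℕ} (hm : m < n) : a + m ∉ arc a m := by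
  rintro ⟨t, ht, hmt⟩
  have := congrArg Fin.val (add_left_cancel hmt)
  rw [Fin.val_natCast, Fin.val_natCast, Nat.mod_eq_of_lt (by omega), Nat.mod_eq_of_lt hm] at this
  omega

lemma sub_one_notMem_arc {a : Fin n} {m : ℕ} (hm : m < n) : a - 1 ∉ arc a m := by
  rintro ⟨t, ht, hmt⟩
  have h0 : ((t + 1 : ℕ) : Fin n) = 0 := by
    push_cast
    linear_combination hmt
  have := Nat.le_of_dvd (by omega) (Fin.natCast_eq_zero.1 h0)
  omega

lemma eq_of_adj_of_mem_arc {a w x : Fin n} {m : ℕ} (hx : x ∈ arc a m) (hw : w ∉ arc a m)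
    (hadj : adj n w x) : w = a - 1 ∨ w = a + m := by
  obtain ⟨t, ht, rfl⟩ := hx
  rcases (adj_iff w _).1 hadj with hwx | rfl
  · left
    obtain _ | t := t
    · linear_combination -hwx
    · exact absurd ⟨t, by omega, by push_cast at hwx; linear_combination hwx⟩ hw
  · right
    obtain rfl : t + 1 = m := by
      by_contra hne
      exact hw ⟨t + 1, by omega, by push_cast; ring⟩
    push_cast; ring

-- `h.getLast hne + 1 = a + h.length` says that the last slice is the far end of the arc.
lemma ValidHist.exists_arc {h : List (Fin n)} (hv : ValidHist n h) (hne : h ≠ []) :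
    ∃ a, (∀ x, x ∈ h ↔ x ∈ arc a h.length) ∧
      (h.getLast hne = a ∨ h.getLast hne + 1 = a + h.length) := by
  induction h using List.reverseRecOn with
  | nil => exact absurd rfl hne
  | append_singleton h w ih =>
    obtain ⟨hv', hw, hadj⟩ := hv.of_append_singleton
    simp only [List.getLast_concat, List.length_append, List.length_singleton,
      List.mem_append, List.mem_singleton]
    rcases eq_or_ne h [] with rfl | hne'
    · refine ⟨w, fun x => ?_, Or.inl rfl⟩
      simp [arc, eq_comm]
    obtain ⟨a, hmem, -⟩ := ih hv' hne'
    obtain ⟨x, hx, hwx⟩ := hadj.resolve_left hne'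
    rw [hmem] at hw hx
    rcases eq_of_adj_of_mem_arc hx hw hwx with rfl | rfl
    · exact ⟨a - 1, fun y => by rw [hmem, mem_arc_sub_one_succ, or_comm], Or.inl rfl⟩
    · exact ⟨a, fun y => by rw [hmem, mem_arc_succ], Or.inr (by push_cast; ring)⟩

lemma parity_natCast (he : Even n) (t : ℕ) : parity (t : Fin n) = t :=
  (ZMod.natCast_eq_natCast_iff' _ _ 2).2 (Nat.mod_mod_of_dvd _ (even_iff_two_dvd.1 he))

lemma parity_add_natCast (he : Even n) (x : Fin n) (t : ℕ) :
    parity (x + (t : Fin n)) = parity x + t := by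
  rw [parity_add he, parity_natCast he]

lemma parity_of_adj (he : Even n) {w x : Fin n} (hadj : adj n w x) : parity w = parity x + 1 := by
  have h1 (y : Fin n) : parity (y + 1) = parity y + 1 := by
    simpa using parity_add_natCast he y 1
  rcases (adj_iff w x).1 hadj with rfl | rfl
  · rw [h1, add_assoc, CharTwo.add_self_eq_zero, add_zero]
  · exact h1 x

lemma parity_sub_one (he : Even n) (x : Fin n) : parity (x - 1) = parity x + 1 :=
  parity_of_adj he (adj_sub_one x)

lemma ValidHist.parity_of_validMove (he : Even n) {h : List (Fin n)} {w : Fin n}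
    (hv : ValidHist n h) (hne : h ≠ []) (hodd : Odd h.length) (hw : ValidMove n h w) :
    parity w = parity (h.getLast hne) + 1 := by
  obtain ⟨a, hmem, hlast⟩ := hv.exists_arc hne
  obtain ⟨x, hx, hwx⟩ := hw.2.resolve_left hne
  rw [hmem] at hx
  have hlen : (h.length : ZMod 2) = 1 := ZMod.natCast_eq_one_iff_odd.2 hodd
  have hlast : parity (h.getLast hne) = parity a := by
    rcases hlast with hl | hl
    · rw [hl]
    · have := congrArg parity hl
      rw [parity_add_natCast he, hlen, ← Nat.cast_one, parity_add_natCast he,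
        Nat.cast_one] at this
      exact add_right_cancel this
  rw [hlast]
  rcases eq_of_adj_of_mem_arc hx (hmem w |>.not.1 hw.1) hwx with rfl | rfl
  · exact parity_sub_one he a
  · rw [parity_add_natCast he, hlen]

lemma exists_sum_parity_ne_le (he : Even n) (P : Fin n → ℝ) :
    ∃ start : Fin n,
      ∑ i with parity i ≠ parity start, P i ≤ ∑ i with parity i = parity start, P i := by
  have h0 : parity (0 : Fin n) = 0 := by simpa using parity_natCast he 0
  have h1 : parity (1 : Fin n) = 1 := by simpa using parity_natCast he 1
  have hflip (z : ZMod 2) : z = 1 ↔ z ≠ 0 := by revert z; decide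
  have hflip' (z : ZMod 2) : z ≠ 1 ↔ z = 0 := by revert z; decide
  by_cases hle : ∑ i with parity i ≠ 0, P i ≤ ∑ i with parity i = 0, P i
  · exact ⟨0, by simpa [h0] using hle⟩
  · refine ⟨1, ?_⟩
    simp only [h1, hflip, hflip']
    exact (not_le.1 hle).le

def shiftStrategy (start : Fin n) (h : List (Fin n)) : Fin n :=
  match h.getLast? with
  | none => start
  | some x => if x + 1 ∈ h then x - 1 else x + 1

lemma shiftStrategy_of_ne_nil (start : Fin n) {h : List (Fin n)} (hne : h ≠ []) :
    shiftStrategy start h =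
      if h.getLast hne + 1 ∈ h then h.getLast hne - 1 else h.getLast hne + 1 := by
  simp [shiftStrategy, List.getLast?_eq_some_getLast hne]

lemma adj_shiftStrategy (start : Fin n) {h : List (Fin n)} (hne : h ≠ []) :
    adj n (shiftStrategy start h) (h.getLast hne) := by
  rw [shiftStrategy_of_ne_nil start hne]
  split_ifs
  exacts [adj_sub_one _, adj_add_one _]

lemma validMove_shiftStrategy (start : Fin n) {h : List (Fin n)} (hv : ValidHist n h)
    (hlen : h.length < n) : ValidMove n h (shiftStrategy start h) := by
  rcases eq_or_ne h [] with rfl | hne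
  · exact ⟨List.not_mem_nil, Or.inl rfl⟩
  refine ⟨?_, Or.inr ⟨_, List.getLast_mem hne, adj_shiftStrategy start hne⟩⟩
  obtain ⟨a, hmem, hlast⟩ := hv.exists_arc hne
  rw [shiftStrategy_of_ne_nil start hne]
  split_ifs with hin
  · rw [hmem] at hin ⊢
    rcases hlast with hl | hl
    · rw [hl]
      exact sub_one_notMem_arc hlen
    · exact absurd (hl ▸ hin) (add_natCast_notMem_arc hlen)
  · exact hin

lemma parity_getElem_of_consistent (he : Even n) (start : Fin n) {h : List (Fin n)}
    (hv : ValidHist n h) (hc : Consistent n isAlice (shiftStrategy start) h)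
    (k : ℕ) (hk : k < h.length) : parity h[k] = parity start + k := by
  induction h using List.reverseRecOn generalizing k with
  | nil => simp at hk
  | append_singleton h w ih =>
    obtain ⟨hv', hw⟩ := hv.of_append_singleton
    obtain ⟨hc', hcw⟩ := hc.of_append_singleton
    rw [List.length_append, List.length_singleton] at hk
    rcases Nat.lt_succ_iff_lt_or_eq.1 hk with hk | rfl
    · rw [List.getElem_append_left hk]
      exact ih hv' hc' k hk
    rw [List.getElem_concat_length rfl]
    rcases eq_or_ne h [] with rfl | hne
    · simp [hcw rfl, shiftStrategy]
    have hlast : parity (h.getLast hne) + 1 = parity start + h.length := by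
      rw [List.getLast_eq_getElem, ih hv' hc' _ _,
        Nat.cast_pred (List.length_pos_iff.2 hne)]
      ring
    rw [← hlast]
    rcases Nat.even_or_odd h.length with hev | hodd
    · rw [hcw (by simpa [isAlice] using Nat.even_iff.1 hev)]
      exact parity_of_adj he (adj_shiftStrategy start hne)
    · exact hv'.parity_of_validMove he hne hodd hw

lemma bobGain_le_sum_parity_ne_of_consistent (he : Even n) (start : Fin n) {P : Fin n → ℝ}
    (hP : ∀ i, 0 ≤ P i) {l : List (Fin n)} (hv : ValidHist n l)
    (hc : Consistent n isAlice (shiftStrategy start) l) :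
    bobGain n P l ≤ ∑ i with parity i ≠ parity start, P i := by
  refine gainOn_le_sum_of_getElem_mem hP hv.1 fun k hk hbob => ?_
  have hk1 : (k : ZMod 2) = 1 :=
    ZMod.natCast_eq_one_iff_odd.2 (Nat.odd_iff.2 (by simpa [isBob] using hbob))
  have hne (z : ZMod 2) : z + 1 ≠ z := by revert z; decide
  simp [parity_getElem_of_consistent he start hv hc k hk, hk1, hne]

lemma jumpCount_eq_zero_of_consistent (start : Fin n) {l : List (Fin n)}
    (hc : Consistent n isAlice (shiftStrategy start) l) : jumpCount n isAlice l = 0 := by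
  refine jumpCount_eq_zero fun k hk hA => ?_
  have hk' : k < l.length := by omega
  have hne : l.take (k + 1) ≠ [] := List.ne_nil_of_length_pos (by simp; omega)
  have hnext : l[k + 1] = shiftStrategy start (l.take (k + 1)) := hc (k + 1) hk hA
  simpa [hnext, List.getLast_take, hk'] using adj_shiftStrategy start hne

end

/-- for an even number of slices Alice has a (zero-jump, i.e. shifts-only
after her first turn) strategy guaranteeing her at least half of the pizza. -/
theorem alice_half_of_even_cutting (n : ℕ) (hn : 0 < n) (he : Even n)
    (P : Fin n → ℝ) (hP : ∀ i, 0 ≤ P i) :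
    AliceJGain n P 0 ((∑ i, P i) / 2) := by
  have : NeZero n := ⟨hn.ne'⟩
  obtain ⟨start, hstart⟩ := exists_sum_parity_ne_le he P
  refine ⟨shiftStrategy start, fun h hv hlen _ => validMove_shiftStrategy start hv hlen,
    fun l hv hlen hc => ⟨?_, (jumpCount_eq_zero_of_consistent start hc).le⟩⟩
  have hbob := bobGain_le_sum_parity_ne_of_consistent he start hP hv hc
  have htotal : aliceGain n P l + bobGain n P l = ∑ i, P i := by
    rw [aliceGain_add_bobGain, hv.1.sum_map_eq_sum_univ (by simpa using hlen)]
  have hsplit : ∑ i with parity i = parity start, P i + ∑ i with parity i ≠ parity start, P i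
      = ∑ i, P i := Finset.sum_filter_add_sum_filter_not _ _ _
  linarith
end

section
/- Let n be odd and V a circular sequence of n nonnegative reals. Every half-circle of minimum size lies in at least one minimal covering triple of half-circles: there exist three half-circles, one of minimum size, each of size at most the potential p(V) of V, which together cover all elements of V, and such that no half-circle in the triple can be replaced by a half-circle of strictly smaller size while keeping the covering property. -/
open Fin.NatCast

/-- The arc of `l` consecutive elements of the circular sequence on `Fin n`
starting at `s`. -/
def arcSet (n : ℕ) [NeZero n] (s : Fin n) (l : ℕ) : Finset (Fin n) :=
  (Finset.range l).image (fun k : ℕ => s + (k : Fin n))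

/-- The size (total weight) of the arc of length `l` starting at `s`. -/
def arcSum (n : ℕ) [NeZero n] (V : Fin n → ℝ) (s : Fin n) (l : ℕ) : ℝ :=
  ∑ k ∈ Finset.range l, V (s + (k : Fin n))

/-- Length of a half-circle: `(n+1)/2`. -/
def hcLen (n : ℕ) : ℕ := (n + 1) / 2

/-- The half-circle (arc of `(n+1)/2` consecutive elements) starting at `s`. -/
def hcSet (n : ℕ) [NeZero n] (s : Fin n) : Finset (Fin n) := arcSet n s (hcLen n)

/-- The size of the half-circle starting at `s`. -/
def hcSum (n : ℕ) [NeZero n] (V : Fin n → ℝ) (s : Fin n) : ℝ := arcSum n V s (hcLen n)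

/-- The potential of an element `v`: the minimum size of a half-circle covering `v`. -/
noncomputable def pot (n : ℕ) [NeZero n] (V : Fin n → ℝ) (v : Fin n) : ℝ :=
  sInf {x : ℝ | ∃ s : Fin n, v ∈ hcSet n s ∧ x = hcSum n V s}

/-- The potential `p(V)` of the circular sequence: the maximum potential of an element. -/
noncomputable def potV (n : ℕ) [NeZero n] (V : Fin n → ℝ) : ℝ :=
  sSup {x : ℝ | ∃ v : Fin n, x = pot n V v}

/-- A minimal covering triple of half-circles: the three half-circles cover everything,
`s1` has minimum size among all half-circles, all three have size at most `p(V)`, and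
none of them can be replaced by a half-circle of strictly smaller size keeping the
covering property. -/
def MinTriple (n : ℕ) [NeZero n] (V : Fin n → ℝ) (s1 s2 s3 : Fin n) : Prop :=
  hcSet n s1 ∪ hcSet n s2 ∪ hcSet n s3 = Finset.univ ∧
  (∀ t, hcSum n V s1 ≤ hcSum n V t) ∧
  hcSum n V s1 ≤ potV n V ∧ hcSum n V s2 ≤ potV n V ∧ hcSum n V s3 ≤ potV n V ∧
  (∀ t, hcSet n t ∪ hcSet n s2 ∪ hcSet n s3 = Finset.univ → hcSum n V s1 ≤ hcSum n V t) ∧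
  (∀ t, hcSet n s1 ∪ hcSet n t ∪ hcSet n s3 = Finset.univ → hcSum n V s2 ≤ hcSum n V t) ∧
  (∀ t, hcSet n s1 ∪ hcSet n s2 ∪ hcSet n t = Finset.univ → hcSum n V s3 ≤ hcSum n V t)

/-- The partition of the circular sequence into six consecutive arcs `A,…,F`
(of lengths `lA,…,lF`, starting at `s0`) such that the half-circles of the triple
`(s1,s2,s3)` are `ABC`, `CDE` and `EFA`. -/
def TriplePartition (n : ℕ) [NeZero n] (s1 s2 s3 s0 : Fin n)
    (lA lB lC lD lE lF : ℕ) : Prop :=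
  lA + lB + lC + lD + lE + lF = n ∧
  lA = lD + 1 ∧ lC = lF + 1 ∧ lE = lB + 1 ∧ 2 ≤ lA ∧ 2 ≤ lC ∧ 2 ≤ lE ∧
  hcSet n s1 = arcSet n s0 (lA + lB + lC) ∧
  hcSet n s2 = arcSet n (s0 + ((lA + lB : ℕ) : Fin n)) (lC + lD + lE) ∧
  hcSet n s3 = arcSet n (s0 + ((lA + lB + lC + lD : ℕ) : Fin n)) (lE + lF + lA)

/-
A half-circle attaining the potential of an element `v` has size at most `p(V)`, so the task is
to cover the complement of the minimum half-circle `s1` by two such cheap half-circles. Walk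
along the arc `u, u+1, …, u+L` (`L` the half-circle length, `u` the first element after `s1`):
an optimal half-circle for `u+e` covers either the whole prefix `[u, u+e]` or the whole suffix
`[u+e, u+L]`. Taking `d` greatest such that the optimal half-circle for `u+d` covers its prefix,
that one together with the optimal half-circle for `u+d+1` covers the arc. Among the pairs
`(s2, s3)` of cheap half-circles completing `s1` to a covering, one minimising
`|s2| + |s3|` cannot have either member replaced by a strictly smaller half-circle.
-/

namespace HalfCircle

open Finset

variable {n : ℕ} [NeZero n]

theorem mem_arcSet_iff {s x : Fin n} {l : ℕ} :
    x ∈ arcSet n s l ↔ ∃ k < l, s + (k : Fin n) = x := by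
  simp [arcSet]

theorem exists_lt_eq_add (s x : Fin n) : ∃ k < n, x = s + (k : Fin n) :=
  ⟨(x - s).val, (x - s).is_lt, by rw [Fin.cast_val_eq_self, add_sub_cancel]⟩

theorem arcSet_union_arcSet_eq_univ (s : Fin n) {a b : ℕ} (hab : n ≤ a + b) :
    arcSet n s a ∪ arcSet n (s + (a : Fin n)) b = univ := by
  refine eq_univ_of_forall fun x => ?_
  obtain ⟨k, hk, rfl⟩ := exists_lt_eq_add s x
  rw [mem_union, mem_arcSet_iff, mem_arcSet_iff]
  by_cases hka : k < a
  · exact Or.inl ⟨k, hka, rfl⟩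
  · refine Or.inr ⟨k - a, by omega, ?_⟩
    rw [add_assoc, ← Nat.cast_add, Nat.add_sub_cancel' (by omega)]

theorem arcSet_covers_prefix_or_suffix {u t : Fin n} {l d : ℕ}
    (hd : u + (d : Fin n) ∈ arcSet n t l) :
    (∀ e ≤ d, u + (e : Fin n) ∈ arcSet n t l) ∨
      (∀ e, d ≤ e → e ≤ l → u + (e : Fin n) ∈ arcSet n t l) := by
  obtain ⟨j, hj, hjd⟩ := mem_arcSet_iff.1 hd
  by_cases hdj : d ≤ j
  · have ht : t = u - ((j - d : ℕ) : Fin n) := by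
      rw [eq_sub_iff_add_eq, ← add_right_cancel_iff (a := (d : Fin n)), add_assoc,
        ← Nat.cast_add, Nat.sub_add_cancel hdj, hjd]
    refine Or.inl fun e he => mem_arcSet_iff.2 ⟨j - d + e, by omega, ?_⟩
    rw [ht, Nat.cast_add, ← add_assoc, sub_add_cancel]
  · have ht : t = u + ((d - j : ℕ) : Fin n) := by
      rw [← add_right_cancel_iff (a := (j : Fin n)), hjd, add_assoc, ← Nat.cast_add,
        Nat.sub_add_cancel (by omega)]
    refine Or.inr fun e hde hel => mem_arcSet_iff.2 ⟨e - (d - j), by omega, ?_⟩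
    rw [ht, add_assoc, ← Nat.cast_add, Nat.add_sub_cancel' (by omega)]

theorem exists_two_arcSet_cover (u : Fin n) (l : ℕ) (c : ℕ → Fin n)
    (hc : ∀ e, u + (e : Fin n) ∈ arcSet n (c e) l) :
    ∃ a b, arcSet n u (l + 1) ⊆ arcSet n (c a) l ∪ arcSet n (c b) l := by
  classical
  let Prefix d := ∀ e ≤ d, u + (e : Fin n) ∈ arcSet n (c d) l
  let d := Nat.findGreatest Prefix l
  have hd : Prefix d := Nat.findGreatest_spec (P := Prefix) (Nat.zero_le l) fun e he => by
    rw [Nat.le_zero.1 he]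
    exact hc 0
  suffices ∀ e ≤ l, u + (e : Fin n) ∈ arcSet n (c d) l ∪ arcSet n (c (d + 1)) l by
    refine ⟨d, d + 1, fun x hx => ?_⟩
    obtain ⟨e, he, rfl⟩ := mem_arcSet_iff.1 hx
    exact this e (by omega)
  intro e he
  rw [mem_union]
  by_cases hed : e ≤ d
  · exact Or.inl (hd e hed)
  · have hdl : d + 1 ≤ l := by omega
    have hnext : ¬ Prefix (d + 1) := Nat.findGreatest_is_greatest (Nat.lt_succ_self d) hdl
    obtain hpre | hsuf := arcSet_covers_prefix_or_suffix (hc (d + 1))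
    · exact absurd hpre hnext
    · exact Or.inr (hsuf e (by omega) he)

variable (V : Fin n → ℝ)

theorem exists_hcSum_eq_pot (v : Fin n) : ∃ s, v ∈ hcSet n s ∧ hcSum n V s = pot n V v := by
  have hfin : {x | ∃ s, v ∈ hcSet n s ∧ x = hcSum n V s}.Finite :=
    (Set.finite_range (hcSum n V)).subset fun _ ⟨s, _, hx⟩ => ⟨s, hx.symm⟩
  have hne : {x | ∃ s, v ∈ hcSet n s ∧ x = hcSum n V s}.Nonempty :=
    ⟨_, v, mem_arcSet_iff.2 ⟨0, by unfold hcLen; have := NeZero.pos n; omega, by simp⟩, rfl⟩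
  obtain ⟨s, hvs, hs⟩ := hne.csInf_mem hfin
  exact ⟨s, hvs, hs.symm⟩

theorem pot_le_potV (v : Fin n) : pot n V v ≤ potV n V := by
  have hfin : {x | ∃ w, x = pot n V w}.Finite :=
    (Set.finite_range (pot n V)).subset fun _ ⟨w, hx⟩ => ⟨w, hx.symm⟩
  exact le_csSup hfin.bddAbove ⟨v, rfl⟩

theorem exists_hcSet_cover_le_potV (s : Fin n) :
    ∃ t₂ t₃, (hcSet n s ∪ hcSet n t₂ ∪ hcSet n t₃ = univ) ∧
      hcSum n V t₂ ≤ potV n V ∧ hcSum n V t₃ ≤ potV n V := by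
  let u := s + (hcLen n : Fin n)
  choose c hcv hcpot using fun e : ℕ => exists_hcSum_eq_pot V (u + (e : Fin n))
  obtain ⟨a, b, hab⟩ := exists_two_arcSet_cover u (hcLen n) c hcv
  refine ⟨c a, c b, ?_, hcpot a ▸ pot_le_potV V _, hcpot b ▸ pot_le_potV V _⟩
  rw [union_assoc, eq_univ_iff_forall]
  intro x
  have hcover := arcSet_union_arcSet_eq_univ s (a := hcLen n) (b := hcLen n + 1)
    (by unfold hcLen; omega)
  rcases mem_union.1 (hcover ▸ mem_univ x) with hx | hx
  · exact mem_union_left _ hx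
  · exact mem_union_right _ (hab hx)

end HalfCircle

theorem exists_rel_pair_min_each {α : Type*} [Finite α] (R : α → α → Prop) (f : α → ℝ)
    (h : ∃ a b, R a b) :
    ∃ a b, R a b ∧ (∀ t, R t b → f a ≤ f t) ∧ (∀ t, R a t → f b ≤ f t) := by
  obtain ⟨a, b, hab⟩ := h
  have : Nonempty {p : α × α // R p.1 p.2} := ⟨⟨(a, b), hab⟩⟩
  obtain ⟨⟨⟨a, b⟩, hab⟩, hmin⟩ := Finite.exists_min fun p : {p : α × α // R p.1 p.2} =>
    f p.1.1 + f p.1.2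
  refine ⟨a, b, hab, fun t ht => ?_, fun t ht => ?_⟩
  · linarith [hmin ⟨(t, b), ht⟩]
  · linarith [hmin ⟨(a, t), ht⟩]

open HalfCircle in
theorem min_halfcircle_in_minimal_triple_general (n : ℕ) [NeZero n]
    (V : Fin n → ℝ)
    (s1 : Fin n) (hmin : ∀ t, hcSum n V s1 ≤ hcSum n V t) :
    ∃ s2 s3 : Fin n, MinTriple n V s1 s2 s3 := by
  obtain ⟨s2, s3, ⟨hcov, h2, h3⟩, hmin2, hmin3⟩ := exists_rel_pair_min_each
    (fun a b => hcSet n s1 ∪ hcSet n a ∪ hcSet n b = Finset.univ ∧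
      hcSum n V a ≤ potV n V ∧ hcSum n V b ≤ potV n V)
    (hcSum n V) (exists_hcSet_cover_le_potV V s1)
  obtain ⟨t1, -, ht1⟩ := exists_hcSum_eq_pot V s1
  refine ⟨s2, s3, hcov, hmin, (hmin t1).trans (ht1 ▸ pot_le_potV V s1), h2, h3,
    fun t _ => hmin t, fun t ht => ?_, fun t ht => ?_⟩
  · exact le_of_not_gt fun hlt => (hmin2 t ⟨ht, hlt.le.trans h2, h3⟩).not_gt hlt
  · exact le_of_not_gt fun hlt => (hmin3 t ⟨ht, h2, hlt.le.trans h3⟩).not_gt hlt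

/-- every half-circle of minimum size lies in a minimal covering triple. -/
theorem min_halfcircle_in_minimal_triple (n : ℕ) (hn : Odd n) [NeZero n]
    (V : Fin n → ℝ) (hV : ∀ i, 0 ≤ V i)
    (s1 : Fin n) (hmin : ∀ t, hcSum n V s1 ≤ hcSum n V t) :
    ∃ s2 s3 : Fin n, MinTriple n V s1 s2 s3 :=
  min_halfcircle_in_minimal_triple_general n V s1 hmin
end

section
/- Let nonnegative reals a, b, c, d, e, f satisfy a+b+c ≤ c+d+e ≤ e+f+a, and set g_1 = e+f+a, g_2 = b/2 + e/4 + c + d, g_3 = f/2 + c/4 + a + b, and P = a+b+c+d+e+f. Then max{g_1, g_2, g_3} ≥ (3g_1 + 4g_2 + 2g_3)/9 = (4P + a + c/2)/9 ≥ 4P/9. -/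
theorem weighted_mean_le_max₃ {p q r x y z : ℝ} (hp : 0 ≤ p) (hq : 0 ≤ q) (hr : 0 ≤ r)
    (hpqr : 0 < p + q + r) :
    (p * x + q * y + r * z) / (p + q + r) ≤ max x (max y z) := by
  set M := max x (max y z)
  have hx : x ≤ M := le_max_left _ _
  have hy : y ≤ M := (le_max_left _ _).trans (le_max_right _ _)
  have hz : z ≤ M := (le_max_right _ _).trans (le_max_right _ _)
  rw [div_le_iff₀ hpqr]
  linarith [mul_le_mul_of_nonneg_left hx hp, mul_le_mul_of_nonneg_left hy hq,
    mul_le_mul_of_nonneg_left hz hr]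

theorem two_jump_arithmetic_general (a b c d e f : ℝ)
    (ha : 0 ≤ a) (hc : 0 ≤ c) :
    (3 * (e + f + a) + 4 * (b/2 + e/4 + c + d) + 2 * (f/2 + c/4 + a + b)) / 9
      ≤ max (e + f + a) (max (b/2 + e/4 + c + d) (f/2 + c/4 + a + b)) ∧
    (3 * (e + f + a) + 4 * (b/2 + e/4 + c + d) + 2 * (f/2 + c/4 + a + b)) / 9
      = (4 * (a + b + c + d + e + f) + a + c/2) / 9 ∧
    4 * (a + b + c + d + e + f) / 9 ≤ (4 * (a + b + c + d + e + f) + a + c/2) / 9 := by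
  refine ⟨?_, by ring, by linarith⟩
  have h := weighted_mean_le_max₃ (x := e + f + a) (y := b/2 + e/4 + c + d)
    (z := f/2 + c/4 + a + b) (p := 3) (q := 4) (r := 2) (by norm_num) (by norm_num)
    (by norm_num) (by norm_num)
  rwa [show (3 : ℝ) + 4 + 2 = 9 by norm_num] at h

/-- the arithmetic behind the `4/9` lower bound. -/
theorem two_jump_arithmetic (a b c d e f : ℝ)
    (ha : 0 ≤ a) (hb : 0 ≤ b) (hc : 0 ≤ c) (hd : 0 ≤ d) (he : 0 ≤ e) (hf : 0 ≤ f)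
    (h1 : a + b + c ≤ c + d + e) (h2 : c + d + e ≤ e + f + a) :
    (3 * (e + f + a) + 4 * (b/2 + e/4 + c + d) + 2 * (f/2 + c/4 + a + b)) / 9
      ≤ max (e + f + a) (max (b/2 + e/4 + c + d) (f/2 + c/4 + a + b)) ∧
    (3 * (e + f + a) + 4 * (b/2 + e/4 + c + d) + 2 * (f/2 + c/4 + a + b)) / 9
      = (4 * (a + b + c + d + e + f) + a + c/2) / 9 ∧
    4 * (a + b + c + d + e + f) / 9 ≤ (4 * (a + b + c + d + e + f) + a + c/2) / 9 :=
  two_jump_arithmetic_general a b c d e f ha hc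
end

section
/- Let n be odd, V a circular sequence of n nonnegative reals with p(V) < |V|/2, partitioned into arcs A,B,C,D,E,F by a minimal triple (half-circles ABC, CDE, EFA). Form the circular sequence V' of length l(B)+l(E) by concatenating B and E. Then E is a half-circle of V' of minimum size among all half-circles of V'. -/
open Fin.NatCast

/-! The half-circles of `V'` have length `l(E) = l(B) + 1`. One starting at position `t ≤ l(B)`
of `B` is the suffix of `B` from `t` followed by a prefix of `E`; the half-circle of `V`
starting at the same point covers the suffix of `B`, `C`, `D` and that prefix of `E`, and it can
replace `CDE` in the triple, so the rest of `E` weighs at most the suffix of `B`.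
One starting at position `u` of `E` is the suffix of `E` from `u` followed by the prefix of `B` of
length `u`; shifting `EFA` by `u` replaces it in the triple, so the first `u` elements of `E` weigh
at most those of `B`. -/

lemma hcLen_le (n : ℕ) [NeZero n] : hcLen n ≤ n := by
  have := NeZero.pos n
  unfold hcLen; omega

section Arc

variable {n : ℕ} [NeZero n]

lemma arcSum_add_natCast (V : Fin n → ℝ) (s : Fin n) (x l : ℕ) :
    arcSum n V (s + x) l = ∑ k ∈ Finset.Ico x (x + l), V (s + k) := by
  rw [Finset.sum_Ico_eq_sum_range, Nat.add_sub_cancel_left, arcSum]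
  simp only [Nat.cast_add, add_assoc]

lemma sum_Ico_add_period (V : Fin n → ℝ) (a b : ℕ) :
    ∑ k ∈ Finset.Ico (a + n) (b + n), V k = ∑ k ∈ Finset.Ico a b, V k := by
  rw [← Finset.sum_Ico_add']
  simp only [Nat.cast_add, Fin.natCast_self, add_zero]

lemma natCast_injOn_range {l : ℕ} (hl : l ≤ n) :
    Set.InjOn (fun k : ℕ => (k : Fin n)) (Finset.range l) := by
  intro k hk k' hk' h
  simp only [Finset.coe_range, Set.mem_Iio] at hk hk'
  simpa [Fin.val_natCast, Nat.mod_eq_of_lt (hk.trans_le hl),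
    Nat.mod_eq_of_lt (hk'.trans_le hl)] using congrArg Fin.val h

lemma arcSum_eq_sum_arcSet (V : Fin n → ℝ) (s : Fin n) {l : ℕ} (hl : l ≤ n) :
    arcSum n V s l = ∑ i ∈ arcSet n s l, V i := by
  rw [arcSet, Finset.sum_image fun k hk k' hk' h =>
    natCast_injOn_range hl hk hk' (add_left_cancel h), arcSum]

lemma hcSum_eq_arcSum_of_hcSet_eq (V : Fin n → ℝ) {s s' : Fin n}
    (h : hcSet n s = arcSet n s' (hcLen n)) : hcSum n V s = arcSum n V s' (hcLen n) := by
  rw [hcSum, arcSum_eq_sum_arcSet V s (hcLen_le n), arcSum_eq_sum_arcSet V s' (hcLen_le n),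
    ← hcSet, h]

lemma natCast_mem_arcSet (s : Fin n) {x l k : ℕ} (hk : k ∈ Finset.Ico x (x + l)) :
    s + (k : Fin n) ∈ arcSet n (s + x) l := by
  rw [Finset.mem_Ico] at hk
  refine Finset.mem_image.2 ⟨k - x, Finset.mem_range.2 (by omega), ?_⟩
  rw [add_assoc, ← Nat.cast_add, Nat.add_sub_cancel' hk.1]

lemma arcSet_union_eq_univ (s : Fin n) {x₁ x₂ x₃ l₁ l₂ l₃ : ℕ}
    (h : ∀ k < n, k ∈ Finset.Ico x₁ (x₁ + l₁) ∨ k ∈ Finset.Ico x₂ (x₂ + l₂) ∨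
      k ∈ Finset.Ico x₃ (x₃ + l₃)) :
    arcSet n (s + x₁) l₁ ∪ arcSet n (s + x₂) l₂ ∪ arcSet n (s + x₃) l₃ = Finset.univ := by
  refine Finset.eq_univ_of_forall fun y => ?_
  obtain ⟨k, hk, rfl⟩ : ∃ k < n, y = s + (k : Fin n) :=
    ⟨(y - s).val, (y - s).isLt, by rw [Fin.cast_val_eq_self, add_sub_cancel]⟩
  simp only [Finset.mem_union]
  rcases h k hk with h | h | h <;> simp [natCast_mem_arcSet s h]

end Arc

section Concat

variable {n : ℕ} [NeZero n] {V : Fin n → ℝ} {s : Fin n} {a b c e : ℕ} {W : Fin (b + e) → ℝ}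

def IsArcConcat (V : Fin n → ℝ) (s : Fin n) (a b c : ℕ) (W : Fin (b + e) → ℝ) : Prop :=
  ∀ t : Fin (b + e), W t = if t.1 < b then V (s + ((a + t.1 : ℕ) : Fin n))
    else V (s + ((c + (t.1 - b) : ℕ) : Fin n))

variable [NeZero (b + e)]

lemma sum_concat_left (hW : IsArcConcat V s a b c W) {i j : ℕ} (hj : j ≤ b) :
    ∑ k ∈ Finset.Ico i j, W k = ∑ k ∈ Finset.Ico (a + i) (a + j), V (s + k) := by
  rw [add_comm a i, add_comm a j, ← Finset.sum_Ico_add]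
  refine Finset.sum_congr rfl fun k hk => ?_
  have hk : k < b := (Finset.mem_Ico.1 hk).2.trans_le hj
  rw [hW, Fin.val_natCast, Nat.mod_eq_of_lt (by omega), if_pos hk]

lemma sum_concat_right (hW : IsArcConcat V s a b c W) {i j : ℕ} (hj : j ≤ e) :
    ∑ k ∈ Finset.Ico (b + i) (b + j), W k = ∑ k ∈ Finset.Ico (c + i) (c + j), V (s + k) := by
  rw [add_comm b i, add_comm b j, add_comm c i, add_comm c j, ← Finset.sum_Ico_add,
    ← Finset.sum_Ico_add]
  refine Finset.sum_congr rfl fun k hk => ?_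
  have hk : k < e := (Finset.mem_Ico.1 hk).2.trans_le hj
  rw [hW, Fin.val_natCast, Nat.mod_eq_of_lt (by omega), if_neg (by omega),
    Nat.add_sub_cancel_left]

lemma arcSum_concat_of_le (hW : IsArcConcat V s a b c W) {t l : ℕ}
    (ht : t ≤ b) (hbl : b ≤ t + l) (hle : t + l ≤ b + e) :
    arcSum (b + e) W t l = ∑ k ∈ Finset.Ico (a + t) (a + b), V (s + k) +
      ∑ k ∈ Finset.Ico c (c + (t + l - b)), V (s + k) := by
  have hE := sum_concat_right hW (i := 0) (j := t + l - b) (by omega)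
  rw [add_zero, add_zero, Nat.add_sub_cancel' hbl] at hE
  rw [← zero_add (t : Fin (b + e)), arcSum_add_natCast]
  simp only [zero_add]
  rw [← Finset.sum_Ico_consecutive _ ht hbl, sum_concat_left hW le_rfl, hE]

lemma arcSum_concat_of_ge (hW : IsArcConcat V s a b c W) {u l : ℕ}
    (hu : u ≤ e) (hel : e ≤ u + l) (hle : u + l ≤ e + b) :
    arcSum (b + e) W (b + u : ℕ) l = ∑ k ∈ Finset.Ico (c + u) (c + e), V (s + k) +
      ∑ k ∈ Finset.Ico a (a + (u + l - e)), V (s + k) := by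
  have hB := sum_concat_left hW (i := 0) (j := u + l - e) (by omega)
  rw [add_zero, ← sum_Ico_add_period, zero_add] at hB
  rw [← zero_add ((b + u : ℕ) : Fin (b + e)), arcSum_add_natCast]
  simp only [zero_add]
  rw [← Finset.sum_Ico_consecutive _ (by omega : b + u ≤ b + e) (by omega : b + e ≤ b + u + l),
    sum_concat_right hW le_rfl, show b + u + l = u + l - e + (b + e) by omega, hB]

end Concat

section MinTriple

variable {n : ℕ} [NeZero n] {V : Fin n → ℝ} {s1 s2 s3 s0 : Fin n} {lA lB lC lD lE lF : ℕ}

lemma TriplePartition.hcSet_eq_arcSet_zero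
    (hTP : TriplePartition n s1 s2 s3 s0 lA lB lC lD lE lF) :
    hcSet n s1 = arcSet n (s0 + ((0 : ℕ) : Fin n)) (lA + lB + lC) := by
  rw [hTP.2.2.2.2.2.2.2.1, Nat.cast_zero, add_zero]

lemma sum_E_le_sum_B_suffix_add_sum_E_prefix
    (hTP : TriplePartition n s1 s2 s3 s0 lA lB lC lD lE lF)
    (hmin : ∀ t, hcSet n s1 ∪ hcSet n t ∪ hcSet n s3 = Finset.univ →
      hcSum n V s2 ≤ hcSum n V t) {t : ℕ} (ht : t ≤ lB) :
    ∑ k ∈ Finset.Ico (lA + lB + lC + lD) (lA + lB + lC + lD + lE), V (s0 + k) ≤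
      ∑ k ∈ Finset.Ico (lA + t) (lA + lB), V (s0 + k) +
        ∑ k ∈ Finset.Ico (lA + lB + lC + lD) (lA + lB + lC + lD + (t + 1)), V (s0 + k) := by
  have hS1 := hTP.hcSet_eq_arcSet_zero
  obtain ⟨hsum, hAD, hCF, hEB, -, -, -, -, hS2, hS3⟩ := hTP
  have hlen : hcLen n = lC + lD + lE := by unfold hcLen; omega
  have hcov : hcSet n s1 ∪ hcSet n (s0 + ((lA + t : ℕ) : Fin n)) ∪ hcSet n s3 = Finset.univ := by
    rw [hS1, hS3, hcSet, hlen]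
    exact arcSet_union_eq_univ s0 fun k hk => by simp only [Finset.mem_Ico]; omega
  have hle := hmin _ hcov
  rw [hcSum_eq_arcSum_of_hcSet_eq V (by rw [hS2, hlen]), hcSum, hlen, arcSum_add_natCast,
    arcSum_add_natCast, show lA + lB + (lC + lD + lE) = lA + lB + lC + lD + lE by omega,
    show lA + t + (lC + lD + lE) = lA + lB + lC + lD + (t + 1) by omega] at hle
  set f : ℕ → ℝ := fun k => V (s0 + k)
  have hc : lA + lB ≤ lA + lB + lC + lD := by omega
  rw [← Finset.sum_Ico_consecutive f hc (Nat.le_add_right _ lE),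
    ← Finset.sum_Ico_consecutive f (by omega : lA + t ≤ lA + lB) (by omega),
    ← Finset.sum_Ico_consecutive f hc (Nat.le_add_right _ (t + 1))] at hle
  linarith

lemma sum_E_le_sum_E_suffix_add_sum_B_prefix
    (hTP : TriplePartition n s1 s2 s3 s0 lA lB lC lD lE lF)
    (hmin : ∀ t, hcSet n s1 ∪ hcSet n s2 ∪ hcSet n t = Finset.univ →
      hcSum n V s3 ≤ hcSum n V t) {u : ℕ} (hu : u ≤ lE) :
    ∑ k ∈ Finset.Ico (lA + lB + lC + lD) (lA + lB + lC + lD + lE), V (s0 + k) ≤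
      ∑ k ∈ Finset.Ico (lA + lB + lC + lD + u) (lA + lB + lC + lD + lE), V (s0 + k) +
        ∑ k ∈ Finset.Ico lA (lA + u), V (s0 + k) := by
  have hS1 := hTP.hcSet_eq_arcSet_zero
  obtain ⟨hsum, hAD, hCF, hEB, -, -, -, -, hS2, hS3⟩ := hTP
  have hlen : hcLen n = lE + lF + lA := by unfold hcLen; omega
  have hcov : hcSet n s1 ∪ hcSet n s2 ∪ hcSet n (s0 + ((lA + lB + lC + lD + u : ℕ) : Fin n)) =
      Finset.univ := by
    rw [hS1, hS2, hcSet, hlen]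
    exact arcSet_union_eq_univ s0 fun k hk => by simp only [Finset.mem_Ico]; omega
  have hle := hmin _ hcov
  rw [hcSum_eq_arcSum_of_hcSet_eq V (by rw [hS3, hlen]), hcSum, hlen, arcSum_add_natCast,
    arcSum_add_natCast, show lA + lB + lC + lD + (lE + lF + lA) = lA + n by omega,
    show lA + lB + lC + lD + u + (lE + lF + lA) = lA + u + n by omega] at hle
  set f : ℕ → ℝ := fun k => V (s0 + k)
  have hwrap : ∑ k ∈ Finset.Ico (lA + n) (lA + u + n), f k = ∑ k ∈ Finset.Ico lA (lA + u), f k :=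
    sum_Ico_add_period (fun i => V (s0 + i)) lA (lA + u)
  have hc : lA + lB + lC + lD ≤ lA + lB + lC + lD + u := Nat.le_add_right _ u
  rw [← Finset.sum_Ico_consecutive f hc (by omega : _ ≤ lA + n),
    ← Finset.sum_Ico_consecutive f (by omega : _ ≤ lA + n) (by omega : _ ≤ lA + u + n),
    hwrap] at hle
  rw [← Finset.sum_Ico_consecutive f hc (by omega : _ ≤ lA + lB + lC + lD + lE)]
  linarith

end MinTriple

theorem E_min_halfcircle_of_concat_general (n : ℕ) [NeZero n]
    (V : Fin n → ℝ)
    (s1 s2 s3 s0 : Fin n) (lA lB lC lD lE lF : ℕ)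
    (hT : MinTriple n V s1 s2 s3)
    (hTP : TriplePartition n s1 s2 s3 s0 lA lB lC lD lE lF)
    [NeZero (lB + lE)]
    (V' : Fin (lB + lE) → ℝ)
    (hV' : ∀ t : Fin (lB + lE), V' t =
      if t.1 < lB then V (s0 + ((lA + t.1 : ℕ) : Fin n))
      else V (s0 + ((lA + lB + lC + lD + (t.1 - lB) : ℕ) : Fin n))) :
    hcLen (lB + lE) = lE ∧
    ∀ t : Fin (lB + lE),
      hcSum (lB + lE) V' ((lB : ℕ) : Fin (lB + lE)) ≤ hcSum (lB + lE) V' t := by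
  obtain ⟨-, -, -, -, -, -, hmin2, hmin3⟩ := hT
  have hEB : lE = lB + 1 := hTP.2.2.2.1
  have hlen : hcLen (lB + lE) = lE := by unfold hcLen; omega
  refine ⟨hlen, fun t => ?_⟩
  have hE := arcSum_concat_of_le hV' (le_refl lB) (Nat.le_add_right lB lE) le_rfl
  simp only [Finset.Ico_self, Finset.sum_empty, zero_add, Nat.add_sub_cancel_left] at hE
  rw [← Fin.cast_val_eq_self t, hcSum, hcSum, hlen, hE]
  rcases le_or_gt t.1 lB with ht | ht
  · rw [arcSum_concat_of_le hV' ht (by omega) (by omega), show t.1 + lE - lB = t.1 + 1 by omega]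
    exact sum_E_le_sum_B_suffix_add_sum_E_prefix hTP hmin2 ht
  · obtain ⟨u, hu⟩ : ∃ u, t.1 = lB + u := ⟨t.1 - lB, by omega⟩
    rw [hu, arcSum_concat_of_ge hV' (by omega) (by omega) (by omega),
      show u + lE - lE = u by omega]
    exact sum_E_le_sum_E_suffix_add_sum_B_prefix hTP hmin3 (by omega)

/-- concatenating the arcs `B` and `E` of a minimal-triple partition
gives a circular sequence `V\'` of odd length `l(B)+l(E)` in which `E` is a
half-circle of minimum size. -/
theorem E_min_halfcircle_of_concat (n : ℕ) (hn : Odd n) [NeZero n]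
    (V : Fin n → ℝ) (hV : ∀ i, 0 ≤ V i)
    (hp : potV n V < (∑ i, V i) / 2)
    (s1 s2 s3 s0 : Fin n) (lA lB lC lD lE lF : ℕ)
    (hT : MinTriple n V s1 s2 s3)
    (hTP : TriplePartition n s1 s2 s3 s0 lA lB lC lD lE lF)
    [NeZero (lB + lE)]
    (V' : Fin (lB + lE) → ℝ)
    (hV' : ∀ t : Fin (lB + lE), V' t =
      if t.1 < lB then V (s0 + ((lA + t.1 : ℕ) : Fin n))
      else V (s0 + ((lA + lB + lC + lD + (t.1 - lB) : ℕ) : Fin n))) :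
    hcLen (lB + lE) = lE ∧
    ∀ t : Fin (lB + lE),
      hcSum (lB + lE) V' ((lB : ℕ) : Fin (lB + lE)) ≤ hcSum (lB + lE) V' t :=
  E_min_halfcircle_of_concat_general n V s1 s2 s3 s0 lA lB lC lD lE lF hT hTP V' hV'
end
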